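/- arXiv:0902.0694 — 2 statements merged into one kernel-verified Lean document; each statement's English description precedes it below -/
import Mathlib

section
/- Let W be standard Brownian motion on [0,1], J(t) = ∫₀ᵗ W_u du. The conditional covariance of (J(s), J(t)), 0 ≤ s ≤ t ≤ 1, given (W_1, J(1)), equals h(s,t) = (s²(1−t)²/6)(2t(1−s) + t − s). In particular the conditional variance of J(t) is (1/3) t³(1−t)³. -/
open Matrix

/-- The conditional covariance of `(J(s), J(t))` given `(W_1, J(1))` is
`G − F Q⁻¹ Fᵀ`, whose off-diagonal entry is `h(s,t) = (s²(1−t)²/6)(2t(1−s)+t−s)` and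
whose `(t,t)` entry (the conditional variance of `J(t)`) is `(1/3)t³(1−t)³`. -/
theorem stmt5 (s t : ℝ) (hs : 0 ≤ s) (hst : s ≤ t) (ht : t ≤ 1)
    (f : ℝ → ℝ) (hf : ∀ x, f x = x^2 / 2)
    (g : ℝ → ℝ → ℝ) (hg : ∀ x y, g x y = x^2 / 6 * (3 * y - x))
    (Q G F : Matrix (Fin 2) (Fin 2) ℝ)
    (hQ : Q = !![1, 1/2; 1/2, 1/3])
    (hG : G = !![g s s, g s t; g s t, g t t])
    (hF : F = !![f s, g s 1; f t, g t 1]) :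
    (G - F * Q⁻¹ * Fᵀ) 0 1 = s^2 * (1 - t)^2 / 6 * (2 * t * (1 - s) + t - s) ∧
    (G - F * Q⁻¹ * Fᵀ) 1 0 = s^2 * (1 - t)^2 / 6 * (2 * t * (1 - s) + t - s) ∧
    (G - F * Q⁻¹ * Fᵀ) 0 0 = s^2 * (1 - s)^2 / 6 * (2 * s * (1 - s)) ∧
    (G - F * Q⁻¹ * Fᵀ) 1 1 = (1/3) * t^3 * (1 - t)^3 := by
  have hQinv : Q⁻¹ = !![4, -6; -6, 12] := by
    rw [hQ, Matrix.inv_def, Matrix.adjugate_fin_two, Matrix.det_fin_two]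
    norm_num [Matrix.smul_of]
  have hFT : Fᵀ = !![f s, f t; g s 1, g t 1] := by
    rw [hF]; ext i j; fin_cases i <;> fin_cases j <;> simp
  subst hQ hG hF
  rw [hQinv, hFT]
  refine ⟨?_, ?_, ?_, ?_⟩ <;>
    simp [Matrix.mul_apply, Fin.sum_univ_succ, hf, hg] <;> ring
end

section
/- Let (Z₀, Z₁, Z₂) be a centered Gaussian vector with covariance Cov(Z₀,Z₀)=1, Cov(Z₁,Z₁)=1, Cov(Z₂,Z₂)=1/3, Cov(Z₀,Z₁)=√κ, Cov(Z₀,Z₂)=√κ(1−κ/2), Cov(Z₁,Z₂)=1/2, where κ ∈ [0,1]. Then the conditional variance of Z₀ given (Z₁, Z₂) equals 1 − 4κ + 6κ² − 3κ³, and this quantity lies in [0,1] for all κ ∈ [0,1]. -/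
open Matrix

/-- The conditional variance `Var(Z₀ | Z₁, Z₂) = Var(Z₀) − v Σ⁻¹ vᵀ` of the limiting
Gaussian vector equals `1 − 4κ + 6κ² − 3κ³`, which lies in `[0,1]` for `κ ∈ [0,1]`. -/
theorem stmt17 (κ : ℝ) (hκ : κ ∈ Set.Icc (0:ℝ) 1)
    (S : Matrix (Fin 2) (Fin 2) ℝ) (hS : S = !![1, 1/2; 1/2, 1/3])
    (v : Fin 2 → ℝ) (hv : v = ![Real.sqrt κ, Real.sqrt κ * (1 - κ / 2)]) :
    1 - v ⬝ᵥ (S⁻¹ *ᵥ v) = 1 - 4 * κ + 6 * κ^2 - 3 * κ^3 ∧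
    (1 - 4 * κ + 6 * κ^2 - 3 * κ^3) ∈ Set.Icc (0:ℝ) 1 := by
  obtain ⟨h0, h1⟩ := hκ
  have hinv : S⁻¹ = !![4, -6; -6, 12] := by
    apply Matrix.inv_eq_right_inv
    rw [hS]
    norm_num [Matrix.mul_fin_two]
    exact Matrix.one_fin_two.symm
  have hs : Real.sqrt κ * Real.sqrt κ = κ := Real.mul_self_sqrt h0
  constructor
  · rw [hinv, hv]
    simp [Matrix.mulVec, dotProduct, Fin.sum_univ_two]
    nlinarith [hs]
  · constructor
    · nlinarith [mul_nonneg (sub_nonneg.2 h1) (by nlinarith [sq_nonneg (2*κ-1)] : (0:ℝ) ≤ 3*κ^2-3*κ+1)]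
    · nlinarith [mul_nonneg h0 (by nlinarith [sq_nonneg (κ-1)] : (0:ℝ) ≤ 3*κ^2-6*κ+4)]
end
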